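/- Suppose γ(k) ~ C k^{2d-1} as k → ∞ for constants C > 0 and d ∈ (0, 1/2), and γ is a symmetric autocovariance function. Then Var[ȳ_T] = (1/T) Σ_{k=1-T}^{T-1}(1 - |k|/T) γ(k) satisfies T^{1-2d} Var[ȳ_T] → 2C/(2d(2d+1)) as T → ∞. -/

import Mathlib

/-!
By symmetry the sum folds to `2 (∑_{j<T} γ j - T⁻¹ ∑_{j<T} j γ j) - γ 0`, so after scaling by
`T^{-2d}` only the growth of two power-weighted partial sums matters. Both come from a
Toeplitz-type fact: if `a j / j ^ q → L` with `q > -1`, then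
`(∑_{j<n} a j) / n ^ (q + 1) → L / (q + 1)`. As `a j - L j ^ q = o(j ^ q)` and `∑ j ^ q → ∞`,
this reduces to `∑_{j<n} j ^ q ~ n ^ (q + 1) / (q + 1)`, which follows by comparing the sum
with `∫_0^n x ^ q`, the integrand being monotone.
The limit `2C (1 / (2d) - 1 / (2d + 1))` is `2C ∫_0^1 (1 - x) x ^ (2d - 1) dx`.
-/

open Filter Real Finset Topology

theorem sum_range_rpow_bounds_of_nonneg {q : ℝ} (hq : 0 ≤ q) (n : ℕ) :
    (n : ℝ) ^ (q + 1) / (q + 1) - (n : ℝ) ^ q ≤ ∑ j ∈ range n, (j : ℝ) ^ q ∧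
      ∑ j ∈ range n, (j : ℝ) ^ q ≤ (n : ℝ) ^ (q + 1) / (q + 1) := by
  have hmono : MonotoneOn (fun x : ℝ => x ^ q) (Set.Icc 0 (0 + n)) :=
    fun x hx y _ hxy => rpow_le_rpow hx.1 hxy hq
  have hint : ∫ x in (0 : ℝ)..0 + n, x ^ q = (n : ℝ) ^ (q + 1) / (q + 1) := by
    rw [integral_rpow (Or.inl (by linarith)), zero_add, zero_rpow (by linarith), sub_zero]
  have hshift : ∑ i ∈ range n, ((0 : ℝ) + ↑(i + 1)) ^ q
      = ∑ j ∈ range n, (j : ℝ) ^ q + (n : ℝ) ^ q - 0 ^ q := by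
    have := sum_range_succ' (fun j : ℕ => (j : ℝ) ^ q) n
    rw [sum_range_succ, Nat.cast_zero] at this
    simp only [zero_add]
    linarith
  have hlow := hmono.integral_le_sum
  have hupp := hmono.sum_le_integral
  rw [hint] at hlow hupp
  rw [hshift] at hlow
  simp only [zero_add] at hupp
  -- `0 ^ q` is `1` when `q = 0`, so only its sign is available here.
  exact ⟨by linarith [zero_rpow_nonneg q], hupp⟩

theorem sum_range_rpow_bounds_of_neg {q : ℝ} (hq1 : -1 < q) (hq : q < 0) (m : ℕ) :
    ((m + 1 : ℕ) : ℝ) ^ (q + 1) / (q + 1) - 1 / (q + 1) ≤ ∑ j ∈ range (m + 1), (j : ℝ) ^ q ∧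
      ∑ j ∈ range (m + 1), (j : ℝ) ^ q ≤ ((m + 1 : ℕ) : ℝ) ^ (q + 1) / (q + 1) + 1 := by
  have hanti : AntitoneOn (fun x : ℝ => x ^ q) (Set.Icc 1 (1 + m)) :=
    fun x hx y _ hxy => rpow_le_rpow_of_nonpos (by linarith [hx.1]) hxy hq.le
  have hint :
      ∫ x in (1 : ℝ)..1 + m, x ^ q = ((m + 1 : ℕ) : ℝ) ^ (q + 1) / (q + 1) - 1 / (q + 1) := by
    rw [integral_rpow (Or.inl hq1), one_rpow]
    push_cast
    ring_nf
  have hsum : ∑ j ∈ range (m + 1), (j : ℝ) ^ q = ∑ i ∈ range m, ((1 : ℝ) + i) ^ q := by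
    rw [sum_range_succ', Nat.cast_zero, zero_rpow hq.ne, add_zero]
    push_cast
    simp only [add_comm]
  have hshift : ∑ i ∈ range m, ((1 : ℝ) + ↑(i + 1)) ^ q
      = ∑ i ∈ range m, ((1 : ℝ) + i) ^ q + ((m + 1 : ℕ) : ℝ) ^ q - 1 := by
    have := sum_range_succ' (fun i : ℕ => ((1 : ℝ) + i) ^ q) m
    rw [sum_range_succ] at this
    push_cast at this ⊢
    simp only [add_zero, one_rpow, add_comm (1 : ℝ) (m : ℝ)] at this
    linarith
  have hlow := hanti.integral_le_sum
  have hupp := hanti.sum_le_integral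
  rw [hint] at hlow hupp
  rw [hshift] at hupp
  rw [hsum]
  have : 0 ≤ ((m + 1 : ℕ) : ℝ) ^ q := rpow_nonneg (Nat.cast_nonneg _) q
  have : 0 < 1 / (q + 1) := one_div_pos.2 (by linarith)
  exact ⟨hlow, by linarith⟩

theorem abs_sum_range_rpow_sub_le {q : ℝ} (hq : -1 < q) {n : ℕ} (hn : 1 ≤ n) :
    |∑ j ∈ range n, (j : ℝ) ^ q - (n : ℝ) ^ (q + 1) / (q + 1)|
      ≤ (n : ℝ) ^ q + (1 + 1 / (q + 1)) := by
  have hn0 : 0 ≤ (n : ℝ) ^ q := rpow_nonneg (Nat.cast_nonneg n) q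
  have hq1 : 0 < 1 / (q + 1) := one_div_pos.2 (by linarith)
  rw [abs_le]
  rcases le_or_gt 0 q with hq0 | hq0
  · obtain ⟨hlow, hupp⟩ := sum_range_rpow_bounds_of_nonneg hq0 n
    constructor <;> linarith
  · obtain ⟨m, rfl⟩ := Nat.exists_eq_add_of_le' hn
    obtain ⟨hlow, hupp⟩ := sum_range_rpow_bounds_of_neg hq hq0 m
    constructor <;> linarith

theorem tendsto_sum_range_rpow_div_rpow {q : ℝ} (hq : -1 < q) :
    Tendsto (fun n : ℕ => (∑ j ∈ range n, (j : ℝ) ^ q) / (n : ℝ) ^ (q + 1)) atTop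
      (𝓝 (1 / (q + 1))) := by
  have hP : Tendsto (fun n : ℕ => (n : ℝ) ^ (q + 1)) atTop atTop :=
    (tendsto_rpow_atTop (by linarith)).comp tendsto_natCast_atTop_atTop
  have hbound : Tendsto (fun n : ℕ => (n : ℝ)⁻¹ + (1 + 1 / (q + 1)) * ((n : ℝ) ^ (q + 1))⁻¹)
      atTop (𝓝 0) := by
    simpa using (tendsto_inv_atTop_zero.comp tendsto_natCast_atTop_atTop).add
      ((tendsto_inv_atTop_zero.comp hP).const_mul (1 + 1 / (q + 1)))
  rw [← tendsto_sub_nhds_zero_iff]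
  refine squeeze_zero_norm' ?_ hbound
  filter_upwards [eventually_ge_atTop 1] with n hn
  have hn0 : (n : ℝ) ≠ 0 := by positivity
  have hPn : 0 < (n : ℝ) ^ (q + 1) := by positivity
  have hq1 : q + 1 ≠ 0 := by linarith
  calc ‖(∑ j ∈ range n, (j : ℝ) ^ q) / (n : ℝ) ^ (q + 1) - 1 / (q + 1)‖
      = |∑ j ∈ range n, (j : ℝ) ^ q - (n : ℝ) ^ (q + 1) / (q + 1)| / (n : ℝ) ^ (q + 1) := by
        rw [Real.norm_eq_abs, ← abs_of_pos hPn, ← abs_div, abs_of_pos hPn]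
        congr 1
        field_simp
    _ ≤ ((n : ℝ) ^ q + (1 + 1 / (q + 1))) / (n : ℝ) ^ (q + 1) := by
        gcongr
        exact abs_sum_range_rpow_sub_le hq hn
    _ = (n : ℝ)⁻¹ + (1 + 1 / (q + 1)) * ((n : ℝ) ^ (q + 1))⁻¹ := by
        rw [rpow_add_one hn0]
        field_simp

theorem tendsto_sum_range_div_rpow_of_tendsto_div_rpow {a : ℕ → ℝ} {q L : ℝ} (hq : -1 < q)
    (ha : Tendsto (fun j : ℕ => a j / (j : ℝ) ^ q) atTop (𝓝 L)) :
    Tendsto (fun n : ℕ => (∑ j ∈ range n, a j) / (n : ℝ) ^ (q + 1)) atTop (𝓝 (L / (q + 1))) := by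
  set P : ℕ → ℝ := fun n => (n : ℝ) ^ (q + 1)
  set G : ℕ → ℝ := fun n => ∑ j ∈ range n, (j : ℝ) ^ q
  have hG : Tendsto (fun n => G n / P n) atTop (𝓝 (1 / (q + 1))) :=
    tendsto_sum_range_rpow_div_rpow hq
  have hP : Tendsto P atTop atTop :=
    (tendsto_rpow_atTop (by linarith)).comp tendsto_natCast_atTop_atTop
  have hP0 : ∀ᶠ n in atTop, P n ≠ 0 := by
    filter_upwards [eventually_ge_atTop 1] with n hn
    positivity
  have hG_top : Tendsto G atTop atTop := by
    refine (hG.pos_mul_atTop (one_div_pos.2 (by linarith)) hP).congr' ?_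
    filter_upwards [hP0] with n hn
    exact div_mul_cancel₀ _ hn
  have hGP : G =O[atTop] P :=
    Asymptotics.isBigO_of_div_tendsto_nhds (hP0.mono fun n hn h => absurd h hn) _ hG
  have herr : (fun j : ℕ => a j - L * (j : ℝ) ^ q) =o[atTop] fun j : ℕ => (j : ℝ) ^ q := by
    have h := ((Asymptotics.isLittleO_one_iff ℝ).2 (tendsto_sub_nhds_zero_iff.2 ha)).mul_isBigO
      (Asymptotics.isBigO_refl (fun j : ℕ => (j : ℝ) ^ q) atTop)
    simp only [one_mul] at h
    refine h.congr' ?_ EventuallyEq.rfl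
    filter_upwards [eventually_ge_atTop 1] with j hj
    have : (j : ℝ) ^ q ≠ 0 := by positivity
    field_simp
  have hsum := ((herr.sum_range (fun j => rpow_nonneg (Nat.cast_nonneg j) q)
    hG_top).trans_isBigO hGP).tendsto_div_nhds_zero
  convert hsum.add (hG.const_mul L) using 1
  · ext n
    simp only [G, P, sum_sub_distrib, ← mul_sum]
    ring
  · rw [zero_add, mul_one_div]

theorem sum_Icc_triangular_weight_of_even {γ : ℤ → ℝ} (hsym : γ.Even) {T : ℕ}
    (hT : 1 ≤ T) :
    ∑ k ∈ Icc (1 - (T : ℤ)) (T - 1), (1 - |(k : ℝ)| / T) * γ k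
      = 2 * (∑ j ∈ range T, γ j - (∑ j ∈ range T, (j : ℝ) * γ j) / T) - γ 0 := by
  obtain ⟨N, rfl⟩ := Nat.exists_eq_add_of_le' hT
  have heven : Function.Even fun k : ℤ => (1 - |(k : ℝ)| / (N + 1 : ℕ)) * γ k := fun k => by
    simp only [Int.cast_neg, abs_neg, hsym k]
  have hIcc : Icc (1 - ((N + 1 : ℕ) : ℤ)) ((N + 1 : ℕ) - 1) = Icc (-(N : ℤ)) N := by
    push_cast
    ring_nf
  rw [hIcc, sum_Icc_of_even_eq_range heven, nsmul_eq_mul]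
  simp only [Int.cast_natCast, Nat.abs_cast, Int.cast_zero, abs_zero, zero_div, sub_zero, one_mul,
    sub_mul, sum_sub_distrib, div_mul_eq_mul_div, ← sum_div]
  push_cast
  ring

theorem long_memory_var_mean_asymptotics_general (γ : ℤ → ℝ) (hsym : ∀ k : ℤ, γ (-k) = γ k)
    (C d : ℝ) (hd0 : 0 < d)
    (hasymp : Tendsto (fun k : ℕ => γ (k : ℤ) / (k : ℝ) ^ (2 * d - 1)) atTop (nhds C)) :
    Tendsto (fun T : ℕ => (T : ℝ) ^ (1 - 2 * d) *
        ((1 / (T : ℝ)) * ∑ k ∈ Finset.Icc (1 - (T : ℤ)) ((T : ℤ) - 1),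
          (1 - |(k : ℝ)| / (T : ℝ)) * γ k))
      atTop (nhds (2 * C / (2 * d * (2 * d + 1)))) := by
  have hlag : Tendsto (fun T : ℕ => (∑ j ∈ range T, γ j) / (T : ℝ) ^ (2 * d)) atTop
      (𝓝 (C / (2 * d))) := by
    simpa using tendsto_sum_range_div_rpow_of_tendsto_div_rpow (by linarith) hasymp
  have hweighted : Tendsto (fun T : ℕ => (∑ j ∈ range T, (j : ℝ) * γ j) / (T : ℝ) ^ (2 * d + 1))
      atTop (𝓝 (C / (2 * d + 1))) := by
    refine tendsto_sum_range_div_rpow_of_tendsto_div_rpow (by linarith) (hasymp.congr' ?_)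
    filter_upwards [eventually_ge_atTop 1] with j hj
    have hj0 : (j : ℝ) ≠ 0 := by positivity
    rw [show 2 * d = 2 * d - 1 + 1 by ring, rpow_add_one hj0, add_sub_cancel_right,
      mul_comm _ (j : ℝ), mul_div_mul_left _ _ hj0]
  have hzero : Tendsto (fun T : ℕ => γ 0 / (T : ℝ) ^ (2 * d)) atTop (𝓝 0) :=
    ((tendsto_rpow_atTop (by linarith)).comp tendsto_natCast_atTop_atTop).const_div_atTop _
  have hlim : 2 * (C / (2 * d) - C / (2 * d + 1)) - 0 = 2 * C / (2 * d * (2 * d + 1)) := by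
    field_simp
    ring
  rw [← hlim]
  refine (((hlag.sub hweighted).const_mul 2).sub hzero).congr' ?_
  filter_upwards [eventually_ge_atTop 1] with T hT
  have hT0 : (T : ℝ) ≠ 0 := by positivity
  rw [sum_Icc_triangular_weight_of_even hsym hT, rpow_add_one hT0,
    show 1 - 2 * d = 1 + -(2 * d) by ring, rpow_add (by positivity), rpow_one,
    rpow_neg (by positivity)]
  field_simp

/-- Long-memory asymptotics of the sample-mean variance: if `γ(k) ~ C k^{2d-1}` with
`C > 0`, `d ∈ (0,1/2)`, and `γ` symmetric, then
`T^{1-2d} · (1/T) ∑_{k=1-T}^{T-1}(1-|k|/T)γ(k) → 2C/(2d(2d+1))`. -/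
theorem long_memory_var_mean_asymptotics (γ : ℤ → ℝ) (hsym : ∀ k : ℤ, γ (-k) = γ k)
    (C d : ℝ) (hC : 0 < C) (hd0 : 0 < d) (hd1 : d < 1/2)
    (hasymp : Tendsto (fun k : ℕ => γ (k : ℤ) / (k : ℝ) ^ (2 * d - 1)) atTop (nhds C)) :
    Tendsto (fun T : ℕ => (T : ℝ) ^ (1 - 2 * d) *
        ((1 / (T : ℝ)) * ∑ k ∈ Finset.Icc (1 - (T : ℤ)) ((T : ℤ) - 1),
          (1 - |(k : ℝ)| / (T : ℝ)) * γ k))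
      atTop (nhds (2 * C / (2 * d * (2 * d + 1)))) :=
  long_memory_var_mean_asymptotics_general γ hsym C d hd0 hasymp
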